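/- arXiv:2501.09516 — 6 statements merged into one kernel-verified Lean document; each statement's English description precedes it below -/
import Mathlib

section
/- Let X ∈ St(n,r), let f : ℝ^{n×r} → ℝ be differentiable at X, let h : ℝ^{n×r} → ℝ be convex, and let B : ℝ^{n×r} → ℝ^{n×r} be a linear map that is self-adjoint for the trace inner product, maps T_X into itself, and is positive definite on T_X. If V* minimizes φ(V) := ⟨∇f(X),V⟩ + (1/2)⟨V,BV⟩ + h(X+V) over the subspace T_X, then φ(0) − φ(V*) ≥ (1/2)⟨V*, B V*⟩. -/
/-!
Along the ray `t ↦ t • V*`, `t ∈ [0, 1]`, convexity of `h` bounds the objective above by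
`t ⟨G, V*⟩ + (t² / 2) ⟨V*, B V*⟩ + (1 - t) h(X) + t h(X + V*)`, which agrees with `φ(V*)` at `t = 1`.
Minimality of `V*` makes the slope of this bound at `t = 1` nonpositive, and that slope is exactly
`φ(V*) - φ(0) + (1/2) ⟨V*, B V*⟩`.
-/

open Matrix Set Filter Topology

/-- The trace inner product `⟨A, B⟩ = tr(AᵀB)` on `ℝ^{n×r}`. -/
noncomputable def tinner {n r : ℕ} (A B : Matrix (Fin n) (Fin r) ℝ) : ℝ := (Aᵀ * B).trace

/-- `V` belongs to the tangent space `T_X = {V : VᵀX + XᵀV = 0}` of the Stiefel manifold at `X`. -/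
def IsTangent {n r : ℕ} (X V : Matrix (Fin n) (Fin r) ℝ) : Prop := Vᵀ * X + Xᵀ * V = 0

attribute [local instance] Matrix.frobeniusNormedAddCommGroup Matrix.frobeniusNormedSpace

lemma add_mul_nonpos_of_forall_lt_one {a q : ℝ} (H : ∀ t ∈ Ioo (0 : ℝ) 1, a + t * q ≤ 0) :
    a + q ≤ 0 := by
  have hlim : Tendsto (fun t : ℝ ↦ a + t * q) (𝓝[<] 1) (𝓝 (a + 1 * q)) :=
    tendsto_nhdsWithin_of_tendsto_nhds ((by fun_prop : Continuous fun t : ℝ ↦ a + t * q).tendsto 1)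
  simpa using le_of_tendsto hlim (eventually_of_mem (Ioo_mem_nhdsLT one_pos) H)

lemma ConvexOn.map_add_smul_le {E : Type*} [AddCommGroup E] [Module ℝ E] {h : E → ℝ}
    {s : Set E} (hh : ConvexOn ℝ s h) {x v : E} (hx : x ∈ s) (hxv : x + v ∈ s) {t : ℝ}
    (ht₀ : 0 ≤ t) (ht₁ : t ≤ 1) :
    h (x + t • v) ≤ (1 - t) * h x + t * h (x + v) := by
  have key := hh.2 hx hxv (sub_nonneg.2 ht₁) ht₀ (sub_add_cancel 1 t)
  rwa [smul_add, ← add_assoc, ← add_smul, sub_add_cancel, one_smul] at key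

theorem half_mul_le_sub_of_forall_le_smul {E : Type*} [AddCommGroup E] [Module ℝ E]
    {ℓ Q h : E → ℝ} (hℓ : ∀ (c : ℝ) v, ℓ (c • v) = c * ℓ v)
    (hQ : ∀ (c : ℝ) v, Q (c • v) = c ^ 2 * Q v) {s : Set E} (hh : ConvexOn ℝ s h)
    {x v : E} (hx : x ∈ s) (hxv : x + v ∈ s)
    (hmin : ∀ t ∈ Ioo (0 : ℝ) 1,
      ℓ v + 1 / 2 * Q v + h (x + v) ≤ ℓ (t • v) + 1 / 2 * Q (t • v) + h (x + t • v)) :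
    1 / 2 * Q v ≤ ℓ 0 + 1 / 2 * Q 0 + h (x + 0) - (ℓ v + 1 / 2 * Q v + h (x + v)) := by
  have hℓ0 : ℓ 0 = 0 := by simpa using hℓ 0 0
  have hQ0 : Q 0 = 0 := by simpa using hQ 0 0
  suffices ℓ v + h (x + v) - h x + Q v ≤ 0 by
    rw [hℓ0, hQ0, add_zero]; linarith
  -- dividing the comparison at `t` by `1 - t > 0` leaves the slope of an affine function of `t`
  have hslope : ∀ t ∈ Ioo (0 : ℝ) 1, ℓ v + h (x + v) - h x + Q v / 2 + t * (Q v / 2) ≤ 0 := by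
    intro t ht
    have hconv := hh.map_add_smul_le hx hxv ht.1.le ht.2.le
    have hcmp := hmin t ht
    rw [hℓ, hQ] at hcmp
    have h1t : 0 < 1 - t := sub_pos.2 ht.2
    nlinarith
  have := add_mul_nonpos_of_forall_lt_one hslope
  linarith

lemma tinner_smul_left {n r : ℕ} (c : ℝ) (A B : Matrix (Fin n) (Fin r) ℝ) :
    tinner (c • A) B = c * tinner A B := by
  simp [tinner, Matrix.transpose_smul, Matrix.smul_mul, Matrix.trace_smul]

lemma tinner_smul_right {n r : ℕ} (c : ℝ) (A B : Matrix (Fin n) (Fin r) ℝ) :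
    tinner A (c • B) = c * tinner A B := by
  simp [tinner, Matrix.mul_smul, Matrix.trace_smul]

lemma tinner_map_smul {n r : ℕ} (B : Matrix (Fin n) (Fin r) ℝ →ₗ[ℝ] Matrix (Fin n) (Fin r) ℝ)
    (c : ℝ) (V : Matrix (Fin n) (Fin r) ℝ) :
    tinner (c • V) (B (c • V)) = c ^ 2 * tinner V (B V) := by
  rw [map_smul, tinner_smul_left, tinner_smul_right, ← mul_assoc, sq]

lemma IsTangent.smul {n r : ℕ} {X V : Matrix (Fin n) (Fin r) ℝ} (hV : IsTangent X V) (c : ℝ) :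
    IsTangent X (c • V) := by
  unfold IsTangent at *
  rw [Matrix.transpose_smul, Matrix.smul_mul, Matrix.mul_smul, ← smul_add, hV, smul_zero]

theorem stmt0_general {n r : ℕ} (X : Matrix (Fin n) (Fin r) ℝ)
    (h : Matrix (Fin n) (Fin r) ℝ → ℝ)
    (G : Matrix (Fin n) (Fin r) ℝ)
    -- `h` is convex
    (hconv : ConvexOn ℝ Set.univ h)
    (B : Matrix (Fin n) (Fin r) ℝ →ₗ[ℝ] Matrix (Fin n) (Fin r) ℝ)
    -- the objective `φ(V) = ⟨∇f(X),V⟩ + (1/2)⟨V,BV⟩ + h(X+V)`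
    (φ : Matrix (Fin n) (Fin r) ℝ → ℝ)
    (hφ : ∀ V, φ V = tinner G V + (1 / 2) * tinner V (B V) + h (X + V))
    -- `V*` minimizes `φ` over `T_X`
    (Vs : Matrix (Fin n) (Fin r) ℝ) (hVs : IsTangent X Vs)
    (hmin : ∀ V, IsTangent X V → φ Vs ≤ φ V) :
    (1 / 2) * tinner Vs (B Vs) ≤ φ 0 - φ Vs := by
  simp only [hφ] at hmin ⊢
  exact half_mul_le_sub_of_forall_le_smul (Q := fun V ↦ tinner V (B V)) (tinner_smul_right · G)
    (tinner_map_smul B) hconv (mem_univ X) (mem_univ _) fun t _ ↦ hmin _ (hVs.smul t)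

theorem stmt0 {n r : ℕ} (X : Matrix (Fin n) (Fin r) ℝ) (hX : Xᵀ * X = 1)
    (f h : Matrix (Fin n) (Fin r) ℝ → ℝ)
    -- `f` is differentiable at `X` with (Euclidean) gradient `G = ∇f(X)`
    (G : Matrix (Fin n) (Fin r) ℝ) (Lf : Matrix (Fin n) (Fin r) ℝ →L[ℝ] ℝ)
    (hf : HasFDerivAt f Lf X) (hGrad : ∀ V, Lf V = tinner G V)
    -- `h` is convex
    (hconv : ConvexOn ℝ Set.univ h)
    -- `B` is linear, self-adjoint for the trace inner product, maps `T_X` into itself,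
    -- and is positive definite on `T_X`
    (B : Matrix (Fin n) (Fin r) ℝ →ₗ[ℝ] Matrix (Fin n) (Fin r) ℝ)
    (hBsa : ∀ U V, tinner U (B V) = tinner (B U) V)
    (hBtan : ∀ V, IsTangent X V → IsTangent X (B V))
    (hBpos : ∀ V, IsTangent X V → V ≠ 0 → 0 < tinner V (B V))
    -- the objective `φ(V) = ⟨∇f(X),V⟩ + (1/2)⟨V,BV⟩ + h(X+V)`
    (φ : Matrix (Fin n) (Fin r) ℝ → ℝ)
    (hφ : ∀ V, φ V = tinner G V + (1 / 2) * tinner V (B V) + h (X + V))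
    -- `V*` minimizes `φ` over `T_X`
    (Vs : Matrix (Fin n) (Fin r) ℝ) (hVs : IsTangent X Vs)
    (hmin : ∀ V, IsTangent X V → φ Vs ≤ φ V) :
    (1 / 2) * tinner Vs (B Vs) ≤ φ 0 - φ Vs :=
  stmt0_general X h G hconv B φ hφ Vs hVs hmin
end

section
/- Let f : ℝ^{n×r} → ℝ be differentiable with L-Lipschitz gradient, let h : ℝ^{n×r} → ℝ be L_h-Lipschitz, and let ϱ, M₁, M₂ > 0. Let X, Y, ξ ∈ ℝ^{n×r} satisfy ‖∇f(X)‖ ≤ ϱ, ‖Y − X‖ ≤ M₁‖ξ‖, and ‖Y − X − ξ‖ ≤ M₂‖ξ‖². Then f(Y) + h(Y) ≤ f(X) + ⟨∇f(X), ξ⟩ + (ϱM₂ + (1/2)LM₁² + L_hM₂)‖ξ‖² + h(X + ξ). -/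
/-!
The descent lemma `f Y ≤ f X + ⟨∇f(X), Y - X⟩ + (L/2)‖Y - X‖²` follows by comparing
`t ↦ f(X + t(Y - X)) - f X - t⟨∇f(X), Y - X⟩`, whose derivative has norm at most `L t ‖Y - X‖²`,
with `t ↦ (L/2) t² ‖Y - X‖²`. Splitting `⟨∇f(X), Y - X⟩ = ⟨∇f(X), ξ⟩ + ⟨∇f(X), Y - X - ξ⟩`,
Cauchy–Schwarz bounds the second term by `ϱ M₂ ‖ξ‖²`, the quadratic term is at most
`(L/2) M₁² ‖ξ‖²`, and `h Y ≤ h (X + ξ) + L_h M₂ ‖ξ‖²` since `‖Y - (X + ξ)‖ ≤ M₂ ‖ξ‖²`.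
-/

open Matrix

attribute [local instance] Matrix.frobeniusNormedAddCommGroup Matrix.frobeniusNormedSpace

theorem norm_sub_sub_fderiv_le_of_lipschitz_fderiv {E F : Type*} [NormedAddCommGroup E]
    [NormedSpace ℝ E] [NormedAddCommGroup F] [NormedSpace ℝ F] {f : E → F}
    {f' : E → E →L[ℝ] F} {L : ℝ} (hf : ∀ z, HasFDerivAt f (f' z) z)
    (hf' : ∀ a b v, ‖f' a v - f' b v‖ ≤ L * ‖a - b‖ * ‖v‖) (x y : E) :
    ‖f y - f x - f' x (y - x)‖ ≤ L / 2 * ‖y - x‖ ^ 2 := by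
  set d := y - x
  have hline : ∀ t : ℝ, HasDerivAt (fun s : ℝ => x + s • d) d t := fun t => by
    simpa using ((hasDerivAt_id t).smul_const d).const_add x
  have hφ : ∀ t : ℝ, HasDerivAt (fun s : ℝ => f (x + s • d) - f x - s • f' x d)
      (f' (x + t • d) d - f' x d) t := fun t =>
    ((((hf _).comp_hasDerivAt t (hline t)).sub_const (f x)).sub
      ((hasDerivAt_id t).smul_const (f' x d))).congr_deriv (by simp)
  have hB : ∀ t : ℝ, HasDerivAt (fun s : ℝ => L / 2 * s ^ 2 * ‖d‖ ^ 2) (L * t * ‖d‖ ^ 2) t :=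
    fun t => (((hasDerivAt_pow 2 t).const_mul (L / 2)).mul_const (‖d‖ ^ 2)).congr_deriv (by
      push_cast; ring)
  have bound : ∀ t ∈ Set.Ico (0 : ℝ) 1, ‖f' (x + t • d) d - f' x d‖ ≤ L * t * ‖d‖ ^ 2 :=
    fun t ht => calc
      ‖f' (x + t • d) d - f' x d‖ ≤ L * ‖t • d‖ * ‖d‖ := by
        simpa using hf' (x + t • d) x d
      _ = L * t * ‖d‖ ^ 2 := by rw [norm_smul, Real.norm_of_nonneg ht.1]; ring
  simpa [d] using image_norm_le_of_norm_deriv_right_le_deriv_boundary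
    (fun t _ => (hφ t).continuousAt.continuousWithinAt) (fun t _ => (hφ t).hasDerivWithinAt)
    (by simp) hB bound (Set.right_mem_Icc.2 zero_le_one)

section TraceInner

variable {n r : ℕ}

theorem tinner_eq_inner (A B : Matrix (Fin n) (Fin r) ℝ) :
    tinner A B = inner ℝ (WithLp.toLp 2 fun i => WithLp.toLp 2 (A i))
      (WithLp.toLp 2 fun i => WithLp.toLp 2 (B i) :
        PiLp 2 fun _ : Fin n => EuclideanSpace ℝ (Fin r)) := by
  simp [tinner, Matrix.trace, Matrix.mul_apply, PiLp.inner_apply,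
    Finset.sum_comm (γ := Fin r), mul_comm]

theorem abs_tinner_le (A B : Matrix (Fin n) (Fin r) ℝ) : |tinner A B| ≤ ‖A‖ * ‖B‖ := by
  rw [tinner_eq_inner]
  exact abs_real_inner_le_norm _ _

theorem tinner_add_right (A B C : Matrix (Fin n) (Fin r) ℝ) :
    tinner A (B + C) = tinner A B + tinner A C := by
  simp [tinner, Matrix.mul_add]

theorem tinner_sub_left (A B C : Matrix (Fin n) (Fin r) ℝ) :
    tinner (A - B) C = tinner A C - tinner B C := by
  simp [tinner, Matrix.sub_mul, Matrix.transpose_sub]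

theorem sub_sub_tinner_le_of_lipschitz_gradient (f : Matrix (Fin n) (Fin r) ℝ → ℝ)
    (g : Matrix (Fin n) (Fin r) ℝ → Matrix (Fin n) (Fin r) ℝ)
    (Lf : Matrix (Fin n) (Fin r) ℝ → (Matrix (Fin n) (Fin r) ℝ →L[ℝ] ℝ))
    (hf : ∀ Z, HasFDerivAt f (Lf Z) Z) (hGrad : ∀ Z V, Lf Z V = tinner (g Z) V)
    (L : ℝ) (hLipg : ∀ A B, ‖g A - g B‖ ≤ L * ‖A - B‖) (X Y : Matrix (Fin n) (Fin r) ℝ) :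
    f Y - f X - tinner (g X) (Y - X) ≤ L / 2 * ‖Y - X‖ ^ 2 := by
  have hLipLf : ∀ A B V, ‖Lf A V - Lf B V‖ ≤ L * ‖A - B‖ * ‖V‖ := fun A B V => by
    rw [hGrad, hGrad, ← tinner_sub_left, Real.norm_eq_abs]
    exact (abs_tinner_le _ _).trans (by gcongr; exact hLipg A B)
  have := norm_sub_sub_fderiv_le_of_lipschitz_fderiv hf hLipLf X Y
  rw [Real.norm_eq_abs] at this
  exact hGrad X (Y - X) ▸ (le_abs_self _).trans this

end TraceInner

theorem stmt3_general {n r : ℕ} (f h : Matrix (Fin n) (Fin r) ℝ → ℝ)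
    -- `f` is differentiable with gradient function `g = ∇f`
    (g : Matrix (Fin n) (Fin r) ℝ → Matrix (Fin n) (Fin r) ℝ)
    (Lf : Matrix (Fin n) (Fin r) ℝ → (Matrix (Fin n) (Fin r) ℝ →L[ℝ] ℝ))
    (hf : ∀ Z, HasFDerivAt f (Lf Z) Z) (hGrad : ∀ Z V, Lf Z V = tinner (g Z) V)
    (L Lh ϱ M₁ M₂ : ℝ)
    -- `∇f` is `L`-Lipschitz
    (hLipg : ∀ A B, ‖g A - g B‖ ≤ L * ‖A - B‖)
    -- `h` is `L_h`-Lipschitz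
    (hLiph : ∀ A B, |h A - h B| ≤ Lh * ‖A - B‖)
    (X Y ξ : Matrix (Fin n) (Fin r) ℝ)
    (hgX : ‖g X‖ ≤ ϱ)
    (h1 : ‖Y - X‖ ≤ M₁ * ‖ξ‖) (h2 : ‖Y - X - ξ‖ ≤ M₂ * ‖ξ‖ ^ 2) :
    f Y + h Y ≤
      f X + tinner (g X) ξ + (ϱ * M₂ + (1 / 2) * L * M₁ ^ 2 + Lh * M₂) * ‖ξ‖ ^ 2 + h (X + ξ) := by
  obtain rfl | hξ := eq_or_ne ξ 0
  · obtain rfl : Y = X := by simpa [sub_eq_zero] using h1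
    simp [tinner]
  have hL : 0 ≤ L := nonneg_of_mul_nonneg_left ((norm_nonneg _).trans (hLipg ξ 0)) (by simpa)
  have hLh : 0 ≤ Lh := nonneg_of_mul_nonneg_left ((abs_nonneg _).trans (hLiph ξ 0)) (by simpa)
  have hdescent := sub_sub_tinner_le_of_lipschitz_gradient f g Lf hf hGrad L hLipg X Y
  have hsplit : tinner (g X) (Y - X) = tinner (g X) ξ + tinner (g X) (Y - X - ξ) := by
    rw [← tinner_add_right, add_sub_cancel]
  have hcs : tinner (g X) (Y - X - ξ) ≤ ϱ * (M₂ * ‖ξ‖ ^ 2) :=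
    (le_abs_self _).trans <| (abs_tinner_le _ _).trans <|
      mul_le_mul hgX h2 (norm_nonneg _) ((norm_nonneg _).trans hgX)
  have hquad : ‖Y - X‖ ^ 2 ≤ M₁ ^ 2 * ‖ξ‖ ^ 2 := by
    simpa [mul_pow] using pow_le_pow_left₀ (norm_nonneg _) h1 2
  have hh : h Y ≤ h (X + ξ) + Lh * ‖Y - X - ξ‖ := by
    have := (le_abs_self _).trans (hLiph Y (X + ξ))
    rw [sub_add_eq_sub_sub] at this
    linarith
  linarith [mul_le_mul_of_nonneg_left hquad hL, mul_le_mul_of_nonneg_left h2 hLh]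

theorem stmt3 {n r : ℕ} (f h : Matrix (Fin n) (Fin r) ℝ → ℝ)
    -- `f` is differentiable with gradient function `g = ∇f`
    (g : Matrix (Fin n) (Fin r) ℝ → Matrix (Fin n) (Fin r) ℝ)
    (Lf : Matrix (Fin n) (Fin r) ℝ → (Matrix (Fin n) (Fin r) ℝ →L[ℝ] ℝ))
    (hf : ∀ Z, HasFDerivAt f (Lf Z) Z) (hGrad : ∀ Z V, Lf Z V = tinner (g Z) V)
    (L Lh ϱ M₁ M₂ : ℝ)
    -- `∇f` is `L`-Lipschitz
    (hLipg : ∀ A B, ‖g A - g B‖ ≤ L * ‖A - B‖)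
    -- `h` is `L_h`-Lipschitz
    (hLiph : ∀ A B, |h A - h B| ≤ Lh * ‖A - B‖)
    (hϱ : 0 < ϱ) (hM₁ : 0 < M₁) (hM₂ : 0 < M₂)
    (X Y ξ : Matrix (Fin n) (Fin r) ℝ)
    (hgX : ‖g X‖ ≤ ϱ)
    (h1 : ‖Y - X‖ ≤ M₁ * ‖ξ‖) (h2 : ‖Y - X - ξ‖ ≤ M₂ * ‖ξ‖ ^ 2) :
    f Y + h Y ≤
      f X + tinner (g X) ξ + (ϱ * M₂ + (1 / 2) * L * M₁ ^ 2 + Lh * M₂) * ‖ξ‖ ^ 2 + h (X + ξ) :=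
  stmt3_general f h g Lf hf hGrad L Lh ϱ M₁ M₂ hLipg hLiph X Y ξ hgX h1 h2
end

section
/- Let X ∈ St(n,r), let f : ℝ^{n×r} → ℝ be differentiable with L-Lipschitz gradient and ‖∇f(X)‖ ≤ ϱ, let h : ℝ^{n×r} → ℝ be convex and L_h-Lipschitz, set F := f + h and c₂ := ϱM₂ + (1/2)LM₁² + L_hM₂ for constants M₁, M₂ > 0. Let B : ℝ^{n×r} → ℝ^{n×r} be self-adjoint for the trace inner product, map T_X into itself, and satisfy ⟨V,BV⟩ ≥ κ₁‖V‖² for all V ∈ T_X with κ₁ > 0, let V* ∈ T_X, and define φ(V) := ⟨∇f(X),V⟩ + (1/2)⟨V,BV⟩ + h(X+V). If 0 < α ≤ 1 and Y ∈ ℝ^{n×r} satisfies ‖Y − X‖ ≤ M₁‖αV*‖ and ‖Y − X − αV*‖ ≤ M₂‖αV*‖², then F(Y) ≤ (1−α)F(X) + α(f(X) + φ(V*)) + (c₂ − κ₁/(2α))‖αV*‖². -/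
/-!
The descent lemma for the `L`-Lipschitz gradient and the Lipschitz bound on `h` compare `F(Y)`
with the model `f(X) + α⟨∇f(X), V*⟩ + h(X + αV*)`, up to errors of order `‖αV*‖²` controlled by
the two proximity assumptions on `Y`. Convexity of `h` on the segment from `X` to `X + V*` splits
`h(X + αV*)`, and the coercivity `κ₁‖V*‖² ≤ ⟨V*, BV*⟩` pays for the quadratic term of `φ(V*)`.
-/

open Matrix

-- The norm `‖·‖` below is the Frobenius norm, associated to the trace inner product.
attribute [local instance] Matrix.frobeniusNormedAddCommGroup Matrix.frobeniusNormedSpace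

section NormedSpace

variable {E : Type*} [NormedAddCommGroup E] [NormedSpace ℝ E]

theorem image_le_add_fderiv_add_of_lipschitz_fderiv {f : E → ℝ} {f' : E → E →L[ℝ] ℝ} {L : ℝ}
    (hf : ∀ x, HasFDerivAt f (f' x) x) (hf' : ∀ x y v, f' x v - f' y v ≤ L * ‖x - y‖ * ‖v‖)
    (x y : E) :
    f y ≤ f x + f' x (y - x) + L / 2 * ‖y - x‖ ^ 2 := by
  set d := y - x
  have hline : ∀ t : ℝ, HasDerivAt (fun s : ℝ => f (x + s • d)) (f' (x + t • d) d) t := fun t =>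
    (hf _).comp_hasDerivAt t ((((hasDerivAt_id t).smul_const d).const_add x).congr_deriv
      (one_smul ℝ d))
  have hmodel : ∀ t : ℝ, HasDerivAt (fun s : ℝ => f x + s * f' x d + L / 2 * ‖d‖ ^ 2 * s ^ 2)
      (f' x d + L * ‖d‖ ^ 2 * t) t := fun t =>
    ((((hasDerivAt_id t).mul_const (f' x d)).const_add (f x)).add
      ((hasDerivAt_pow 2 t).const_mul (L / 2 * ‖d‖ ^ 2))).congr_deriv (by norm_num; ring)
  have hslope : ∀ t ∈ Set.Ico (0 : ℝ) 1, f' (x + t • d) d ≤ f' x d + L * ‖d‖ ^ 2 * t := by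
    rintro t ⟨ht, -⟩
    have := hf' (x + t • d) x d
    rw [add_sub_cancel_left, norm_smul, Real.norm_of_nonneg ht] at this
    linarith
  have := image_le_of_deriv_right_le_deriv_boundary
    (fun t _ => (hline t).continuousAt.continuousWithinAt)
    (fun t _ => (hline t).hasDerivWithinAt) (by simp)
    (fun t _ => (hmodel t).continuousAt.continuousWithinAt)
    (fun t _ => (hmodel t).hasDerivWithinAt) hslope (Set.right_mem_Icc.2 zero_le_one)
  simpa [d] using this

theorem image_le_add_fderiv_add_sq_of_dist_le {f : E → ℝ} {f' : E → E →L[ℝ] ℝ} {L ϱ M₁ M₂ : ℝ}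
    (hf : ∀ x, HasFDerivAt f (f' x) x) (hf' : ∀ x y v, f' x v - f' y v ≤ L * ‖x - y‖ * ‖v‖)
    (hL : 0 ≤ L) (hϱ : 0 ≤ ϱ) {x y v : E} (hfx : ∀ w, f' x w ≤ ϱ * ‖w‖) (hy₁ : ‖y - x‖ ≤ M₁ * ‖v‖)
    (hy₂ : ‖y - x - v‖ ≤ M₂ * ‖v‖ ^ 2) :
    f y ≤ f x + f' x v + (ϱ * M₂ + 1 / 2 * L * M₁ ^ 2) * ‖v‖ ^ 2 := by
  have hdescent := image_le_add_fderiv_add_of_lipschitz_fderiv hf hf' x y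
  have hsplit : f' x (y - x) = f' x v + f' x (y - x - v) := by rw [← map_add, add_sub_cancel]
  have hlinear : f' x (y - x - v) ≤ ϱ * (M₂ * ‖v‖ ^ 2) := (hfx _).trans (by gcongr)
  have hquadratic : L / 2 * ‖y - x‖ ^ 2 ≤ L / 2 * (M₁ * ‖v‖) ^ 2 := by gcongr
  linarith

theorem image_le_convex_comb_add_sq_of_dist_le {h : E → ℝ} {Lh M₂ α : ℝ}
    (hconv : ConvexOn ℝ Set.univ h) (hLip : ∀ a b, |h a - h b| ≤ Lh * ‖a - b‖) (hLh : 0 ≤ Lh)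
    (hα₀ : 0 ≤ α) (hα₁ : α ≤ 1) {x y v : E} (hy : ‖y - x - α • v‖ ≤ M₂ * ‖α • v‖ ^ 2) :
    h y ≤ (1 - α) * h x + α * h (x + v) + Lh * M₂ * ‖α • v‖ ^ 2 := by
  have hsegment : h (x + α • v) ≤ (1 - α) * h x + α * h (x + v) := by
    have := hconv.2 (Set.mem_univ x) (Set.mem_univ (x + v)) (sub_nonneg.2 hα₁) hα₀ (by ring)
    rwa [show (1 - α) • x + α • (x + v) = x + α • v by module] at this
  have hlip : h y - h (x + α • v) ≤ Lh * (M₂ * ‖α • v‖ ^ 2) :=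
    calc h y - h (x + α • v) ≤ |h y - h (x + α • v)| := le_abs_self _
      _ ≤ Lh * ‖y - (x + α • v)‖ := hLip _ _
      _ ≤ Lh * (M₂ * ‖α • v‖ ^ 2) := by rw [← sub_sub]; gcongr
  linarith

end NormedSpace

section TraceInner

variable {n r : ℕ}

/-- The Frobenius norm is by definition the norm of this `ℓ²`-sum of `ℓ²`-spaces. -/
def toL2 (A : Matrix (Fin n) (Fin r) ℝ) : PiLp 2 fun _ : Fin n => EuclideanSpace ℝ (Fin r) :=
  WithLp.toLp 2 fun i => WithLp.toLp 2 (A i)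

theorem norm_toL2 (A : Matrix (Fin n) (Fin r) ℝ) : ‖toL2 A‖ = ‖A‖ := rfl

theorem tinner_eq_inner_toL2 (A B : Matrix (Fin n) (Fin r) ℝ) :
    tinner A B = inner ℝ (toL2 A) (toL2 B) := by
  simp only [tinner, toL2, trace, diag, mul_apply, transpose_apply, PiLp.inner_apply]
  rw [Finset.sum_comm]
  simp [mul_comm]

theorem tinner_le_norm_mul_norm (A B : Matrix (Fin n) (Fin r) ℝ) :
    tinner A B ≤ ‖A‖ * ‖B‖ := by
  rw [tinner_eq_inner_toL2, ← norm_toL2, ← norm_toL2]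
  exact real_inner_le_norm _ _

end TraceInner

theorem stmt5_general {n r : ℕ} (X : Matrix (Fin n) (Fin r) ℝ)
    (f h : Matrix (Fin n) (Fin r) ℝ → ℝ)
    -- `f` is differentiable with gradient function `g = ∇f`, which is `L`-Lipschitz
    (g : Matrix (Fin n) (Fin r) ℝ → Matrix (Fin n) (Fin r) ℝ)
    (Lf : Matrix (Fin n) (Fin r) ℝ → (Matrix (Fin n) (Fin r) ℝ →L[ℝ] ℝ))
    (hf : ∀ Z, HasFDerivAt f (Lf Z) Z) (hGrad : ∀ Z V, Lf Z V = tinner (g Z) V)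
    (L Lh ϱ M₁ M₂ κ₁ : ℝ)
    (hLipg : ∀ A B, ‖g A - g B‖ ≤ L * ‖A - B‖)
    (hgX : ‖g X‖ ≤ ϱ)
    -- `h` is convex and `L_h`-Lipschitz
    (hconv : ConvexOn ℝ Set.univ h)
    (hLiph : ∀ A B, |h A - h B| ≤ Lh * ‖A - B‖)
    -- `B` is linear, self-adjoint for the trace inner product, maps `T_X` into itself,
    -- and satisfies `⟨V,BV⟩ ≥ κ₁‖V‖²` on `T_X`
    (B : Matrix (Fin n) (Fin r) ℝ →ₗ[ℝ] Matrix (Fin n) (Fin r) ℝ)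
    (hBlow : ∀ V, IsTangent X V → κ₁ * ‖V‖ ^ 2 ≤ tinner V (B V))
    -- `V* ∈ T_X` and the objective `φ(V) = ⟨∇f(X),V⟩ + (1/2)⟨V,BV⟩ + h(X+V)`
    (Vs : Matrix (Fin n) (Fin r) ℝ) (hVs : IsTangent X Vs)
    (φ : Matrix (Fin n) (Fin r) ℝ → ℝ)
    (hφ : ∀ V, φ V = tinner (g X) V + (1 / 2) * tinner V (B V) + h (X + V))
    (α : ℝ) (hα0 : 0 < α) (hα1 : α ≤ 1)
    (Y : Matrix (Fin n) (Fin r) ℝ)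
    (hY1 : ‖Y - X‖ ≤ M₁ * ‖α • Vs‖) (hY2 : ‖Y - X - α • Vs‖ ≤ M₂ * ‖α • Vs‖ ^ 2) :
    f Y + h Y ≤
      (1 - α) * (f X + h X) + α * (f X + φ Vs) +
        (ϱ * M₂ + (1 / 2) * L * M₁ ^ 2 + Lh * M₂ - κ₁ / (2 * α)) * ‖α • Vs‖ ^ 2 := by
  rcases eq_or_ne Vs 0 with rfl | hVs0
  · obtain rfl : Y = X := by simpa [sub_eq_zero] using hY1
    simp [hφ, tinner]
    linarith
  have hVs_pos : 0 < ‖X + Vs - X‖ := by simpa using hVs0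
  have hL : 0 ≤ L := nonneg_of_mul_nonneg_left ((norm_nonneg _).trans (hLipg _ _)) hVs_pos
  have hLh : 0 ≤ Lh := nonneg_of_mul_nonneg_left ((abs_nonneg _).trans (hLiph _ _)) hVs_pos
  have hLf : ∀ A B V, Lf A V - Lf B V ≤ L * ‖A - B‖ * ‖V‖ := fun A B V => by
    rw [hGrad, hGrad, ← tinner_sub_left]
    exact (tinner_le_norm_mul_norm _ _).trans (by gcongr; exact hLipg A B)
  have hLfX : ∀ V, Lf X V ≤ ϱ * ‖V‖ := fun V => by
    rw [hGrad]
    exact (tinner_le_norm_mul_norm _ _).trans (by gcongr)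
  have hfY : f Y ≤ f X + α * tinner (g X) Vs + (ϱ * M₂ + 1 / 2 * L * M₁ ^ 2) * ‖α • Vs‖ ^ 2 := by
    convert image_le_add_fderiv_add_sq_of_dist_le hf hLf hL ((norm_nonneg _).trans hgX) hLfX hY1
      hY2 using 3
    -- the lemma's `•` comes from the Frobenius `NormedSpace`, not from the type of `Lf X`
    exact (((Lf X).map_smul α Vs).trans (by rw [hGrad, smul_eq_mul])).symm
  have hhY := image_le_convex_comb_add_sq_of_dist_le hconv hLiph hLh hα0.le hα1 hY2
  have hcoercive : κ₁ / (2 * α) * ‖α • Vs‖ ^ 2 ≤ α / 2 * tinner Vs (B Vs) :=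
    calc κ₁ / (2 * α) * ‖α • Vs‖ ^ 2 = α / 2 * (κ₁ * ‖Vs‖ ^ 2) := by
          rw [norm_smul, Real.norm_of_nonneg hα0.le]; field_simp
      _ ≤ α / 2 * tinner Vs (B Vs) := by gcongr; exact hBlow Vs hVs
  rw [hφ]
  linarith

theorem stmt5 {n r : ℕ} (X : Matrix (Fin n) (Fin r) ℝ) (hX : Xᵀ * X = 1)
    (f h : Matrix (Fin n) (Fin r) ℝ → ℝ)
    -- `f` is differentiable with gradient function `g = ∇f`, which is `L`-Lipschitz
    (g : Matrix (Fin n) (Fin r) ℝ → Matrix (Fin n) (Fin r) ℝ)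
    (Lf : Matrix (Fin n) (Fin r) ℝ → (Matrix (Fin n) (Fin r) ℝ →L[ℝ] ℝ))
    (hf : ∀ Z, HasFDerivAt f (Lf Z) Z) (hGrad : ∀ Z V, Lf Z V = tinner (g Z) V)
    (L Lh ϱ M₁ M₂ κ₁ : ℝ)
    (hLipg : ∀ A B, ‖g A - g B‖ ≤ L * ‖A - B‖)
    (hgX : ‖g X‖ ≤ ϱ)
    -- `h` is convex and `L_h`-Lipschitz
    (hconv : ConvexOn ℝ Set.univ h)
    (hLiph : ∀ A B, |h A - h B| ≤ Lh * ‖A - B‖)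
    (hM₁ : 0 < M₁) (hM₂ : 0 < M₂) (hκ₁ : 0 < κ₁)
    -- `B` is linear, self-adjoint for the trace inner product, maps `T_X` into itself,
    -- and satisfies `⟨V,BV⟩ ≥ κ₁‖V‖²` on `T_X`
    (B : Matrix (Fin n) (Fin r) ℝ →ₗ[ℝ] Matrix (Fin n) (Fin r) ℝ)
    (hBsa : ∀ U V, tinner U (B V) = tinner (B U) V)
    (hBtan : ∀ V, IsTangent X V → IsTangent X (B V))
    (hBlow : ∀ V, IsTangent X V → κ₁ * ‖V‖ ^ 2 ≤ tinner V (B V))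
    -- `V* ∈ T_X` and the objective `φ(V) = ⟨∇f(X),V⟩ + (1/2)⟨V,BV⟩ + h(X+V)`
    (Vs : Matrix (Fin n) (Fin r) ℝ) (hVs : IsTangent X Vs)
    (φ : Matrix (Fin n) (Fin r) ℝ → ℝ)
    (hφ : ∀ V, φ V = tinner (g X) V + (1 / 2) * tinner V (B V) + h (X + V))
    (α : ℝ) (hα0 : 0 < α) (hα1 : α ≤ 1)
    (Y : Matrix (Fin n) (Fin r) ℝ)
    (hY1 : ‖Y - X‖ ≤ M₁ * ‖α • Vs‖) (hY2 : ‖Y - X - α • Vs‖ ≤ M₂ * ‖α • Vs‖ ^ 2) :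
    f Y + h Y ≤
      (1 - α) * (f X + h X) + α * (f X + φ Vs) +
        (ϱ * M₂ + (1 / 2) * L * M₁ ^ 2 + Lh * M₂ - κ₁ / (2 * α)) * ‖α • Vs‖ ^ 2 :=
  stmt5_general X f h g Lf hf hGrad L Lh ϱ M₁ M₂ κ₁ hLipg hgX hconv hLiph B hBlow Vs hVs φ hφ α hα0
    hα1 Y hY1 hY2
end

section
/- Let δ, C > 0, let B ∈ ℝ^{n×n} be symmetric positive semidefinite, and let s, ȳ ∈ ℝ^{n×r} satisfy tr(sᵀBs) > 0, tr(sᵀȳ) ≥ 0.25 δ‖s‖² > 0, and ‖ȳ‖ ≤ C‖s‖. Then the BFGS-updated matrix B⁺ := B − (Bs)(Bs)ᵀ/tr(sᵀBs) + ȳȳᵀ/tr(sᵀȳ) satisfies ‖B⁺‖₂ ≤ ‖B‖₂ + 4C²/δ, where ‖·‖₂ denotes the spectral (operator 2-) norm. -/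
open Matrix
open scoped Matrix.Norms.L2Operator
-- With the scoped `Matrix.L2OpNorm` instances, `‖·‖` on matrices below is the
-- spectral (operator 2-) norm `‖·‖₂`.

/-- The Frobenius norm `‖A‖ = √(tr(AᵀA))` on `ℝ^{n×r}`, associated to the trace inner product. -/
noncomputable def fnorm {n r : ℕ} (A : Matrix (Fin n) (Fin r) ℝ) : ℝ :=
  Real.sqrt (Aᵀ * A).trace

/-!
Split the update as `B⁺ = X + u⁻¹ • ȳȳᵀ` with `X = B - t⁻¹ • (Bs)(Bs)ᵀ`, `t = tr(sᵀBs)`,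
`u = tr(sᵀȳ)`. Writing `B = LᵀL`, Cauchy–Schwarz gives `(Bs)(Bs)ᵀ ≤ t • B` in the Loewner order,
so `0 ≤ X ≤ B` and hence `‖X‖₂ ≤ ‖B‖₂`. The rank-`r` correction is positive semidefinite with
`‖ȳȳᵀ‖₂ ≤ ‖ȳ‖²`, so its norm is at most `C²‖s‖² / (δ‖s‖²/4) = 4C²/δ`.
-/

open scoped MatrixOrder

section IsometricCFC

-- Real matrices are not a complex C⋆-algebra, so `CStarAlgebra.norm_le_norm_of_nonneg_of_le`
-- does not apply; an isometric real functional calculus is enough.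

variable {A : Type*} [NormedRing A] [StarRing A] [PartialOrder A] [StarOrderedRing A]
  [NormedAlgebra ℝ A] [IsometricContinuousFunctionalCalculus ℝ A IsSelfAdjoint]
  [NonnegSpectrumClass ℝ A]

lemma norm_le_of_nonneg_of_le_algebraMap {a : A} {c : ℝ} (hc : 0 ≤ c) (ha : 0 ≤ a)
    (hac : a ≤ algebraMap ℝ A c) : ‖a‖ ≤ c := by
  have hspec_nonneg := (StarOrderedRing.nonneg_iff_spectrum_nonneg (R := ℝ) a).1 ha
  have hspec_le := (le_algebraMap_iff_spectrum_le (R := ℝ)).1 hac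
  rw [← cfc_id' ℝ a]
  exact norm_cfc_le hc fun x hx => by
    rw [Real.norm_of_nonneg (hspec_nonneg x hx)]; exact hspec_le x hx

lemma norm_le_norm_of_nonneg_of_le {a b : A} (ha : 0 ≤ a) (hab : a ≤ b) : ‖a‖ ≤ ‖b‖ := by
  refine norm_le_of_nonneg_of_le_algebraMap (norm_nonneg b) ha (hab.trans ?_)
  have hb : IsSelfAdjoint b := .of_nonneg (ha.trans hab)
  exact le_algebraMap_of_spectrum_le fun x hx =>
    (le_abs_self x).trans (IsometricContinuousFunctionalCalculus.norm_spectrum_le b hx)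

end IsometricCFC

namespace Matrix

variable {m n : Type*} [Fintype m] [Fintype n]

lemma trace_transpose_mul_self_nonneg (M : Matrix m n ℝ) : 0 ≤ (Mᵀ * M).trace := by
  simpa only [conjTranspose_eq_transpose_of_trivial]
    using (posSemidef_conjTranspose_mul_self M).trace_nonneg

lemma mul_transpose_self_le_trace_smul_one [DecidableEq m] (M : Matrix m n ℝ) :
    M * Mᵀ ≤ (Mᵀ * M).trace • (1 : Matrix m m ℝ) := by
  have hM := isHermitian_mul_conjTranspose_self M
  rw [conjTranspose_eq_transpose_of_trivial] at hM
  refine le_iff.2 <| .of_dotProduct_mulVec_nonneg ((isHermitian_one.smul (.all _)).sub hM)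
    fun x => ?_
  have hquad : star x ⬝ᵥ ((Mᵀ * M).trace • 1 - M * Mᵀ) *ᵥ x
      = (Mᵀ * M).trace * (x ⬝ᵥ x) - (Mᵀ *ᵥ x) ⬝ᵥ (Mᵀ *ᵥ x) := by
    rw [star_trivial, sub_mulVec, dotProduct_sub, smul_mulVec, one_mulVec, dotProduct_smul,
      smul_eq_mul, ← mulVec_mulVec, dotProduct_mulVec, ← mulVec_transpose]
  have hcs : (Mᵀ *ᵥ x) ⬝ᵥ (Mᵀ *ᵥ x) ≤ (Mᵀ * M).trace * (x ⬝ᵥ x) := by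
    simp only [dotProduct, mulVec, trace, diag, mul_apply, transpose_apply]
    rw [Finset.sum_mul]
    refine Finset.sum_le_sum fun j _ => ?_
    simpa only [sq] using Finset.sum_mul_sq_le_sq_mul_sq Finset.univ (fun i => M i j) x
  rw [hquad]
  linarith

lemma PosSemidef.mul_mul_transpose_le_trace_smul {B : Matrix n n ℝ} (hB : B.PosSemidef)
    (s : Matrix n m ℝ) : B * s * (B * s)ᵀ ≤ (sᵀ * B * s).trace • B := by
  classical
  obtain ⟨L, rfl⟩ := CStarAlgebra.nonneg_iff_eq_star_mul_self.mp hB.nonneg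
  have key := star_left_conjugate_le_conjugate (mul_transpose_self_le_trace_smul_one (L * s)) L
  simp only [star_eq_conjTranspose, conjTranspose_eq_transpose_of_trivial] at key ⊢
  convert key using 1
  · simp only [transpose_mul, transpose_transpose, Matrix.mul_assoc]
  · rw [Matrix.mul_smul, Matrix.smul_mul, Matrix.mul_one, transpose_mul]
    simp only [Matrix.mul_assoc]

lemma norm_mul_transpose_self_le_trace [DecidableEq m] (M : Matrix m n ℝ) :
    ‖M * Mᵀ‖ ≤ (Mᵀ * M).trace := by
  have hM := posSemidef_self_mul_conjTranspose M
  rw [conjTranspose_eq_transpose_of_trivial] at hM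
  refine norm_le_of_nonneg_of_le_algebraMap (trace_transpose_mul_self_nonneg M) hM.nonneg ?_
  simpa only [Algebra.algebraMap_eq_smul_one] using mul_transpose_self_le_trace_smul_one M

lemma PosSemidef.norm_sub_inv_trace_smul_le [DecidableEq n] {B : Matrix n n ℝ}
    (hB : B.PosSemidef) (s : Matrix n m ℝ) :
    ‖B - (sᵀ * B * s).trace⁻¹ • (B * s * (B * s)ᵀ)‖ ≤ ‖B‖ := by
  set t := (sᵀ * B * s).trace
  have ht : 0 ≤ t := by simpa [t] using (hB.conjTranspose_mul_mul_same s).trace_nonneg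
  have hP : 0 ≤ B * s * (B * s)ᵀ := by
    simpa only [conjTranspose_eq_transpose_of_trivial]
      using (posSemidef_self_mul_conjTranspose (B * s)).nonneg
  have hle : t⁻¹ • (B * s * (B * s)ᵀ) ≤ B :=
    calc t⁻¹ • (B * s * (B * s)ᵀ)
        ≤ t⁻¹ • t • B := smul_le_smul_of_nonneg_left (hB.mul_mul_transpose_le_trace_smul s)
          (inv_nonneg.2 ht)
      _ = (t⁻¹ * t) • B := smul_smul _ _ _
      _ ≤ (1 : ℝ) • B := smul_le_smul_of_nonneg_right inv_mul_le_one hB.nonneg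
      _ = B := one_smul _ _
  exact norm_le_norm_of_nonneg_of_le (sub_nonneg.2 hle)
    (sub_le_self _ (smul_nonneg (inv_nonneg.2 ht) hP))

end Matrix

lemma sq_fnorm {n r : ℕ} (A : Matrix (Fin n) (Fin r) ℝ) : fnorm A ^ 2 = (Aᵀ * A).trace :=
  Real.sq_sqrt (trace_transpose_mul_self_nonneg A)

theorem stmt7_general {n r : ℕ} (δ C : ℝ)
    -- `B` is symmetric positive semidefinite
    (B : Matrix (Fin n) (Fin n) ℝ) (hB : B.PosSemidef)
    (s ybar : Matrix (Fin n) (Fin r) ℝ)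
    (h2 : 0.25 * δ * fnorm s ^ 2 ≤ (sᵀ * ybar).trace)
    (h3 : 0 < 0.25 * δ * fnorm s ^ 2)
    (h4 : fnorm ybar ≤ C * fnorm s) :
    ‖B - ((sᵀ * B * s).trace)⁻¹ • (B * s * (B * s)ᵀ)
        + ((sᵀ * ybar).trace)⁻¹ • (ybar * ybarᵀ)‖ ≤ ‖B‖ + 4 * C ^ 2 / δ := by
  set u := (sᵀ * ybar).trace
  have hu : 0 < u := h3.trans_le h2
  have hδ : δ ≠ 0 := by rintro rfl; simp at h3
  have hy : fnorm ybar ^ 2 ≤ C ^ 2 * fnorm s ^ 2 := by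
    rw [← mul_pow]; exact pow_le_pow_left₀ (Real.sqrt_nonneg _) h4 2
  have hupdate : ‖u⁻¹ • (ybar * ybarᵀ)‖ ≤ 4 * C ^ 2 / δ :=
    calc ‖u⁻¹ • (ybar * ybarᵀ)‖ = ‖ybar * ybarᵀ‖ / u := by
          rw [norm_smul, Real.norm_of_nonneg (inv_nonneg.2 hu.le), inv_mul_eq_div]
      _ ≤ fnorm ybar ^ 2 / u := by
          rw [sq_fnorm]; gcongr; exact norm_mul_transpose_self_le_trace ybar
      _ ≤ C ^ 2 * fnorm s ^ 2 / (0.25 * δ * fnorm s ^ 2) := by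
          gcongr
      _ = 4 * C ^ 2 / δ := by rw [div_eq_div_iff h3.ne' hδ]; ring
  calc _ ≤ ‖B - (sᵀ * B * s).trace⁻¹ • (B * s * (B * s)ᵀ)‖ + ‖u⁻¹ • (ybar * ybarᵀ)‖ :=
        norm_add_le _ _
    _ ≤ ‖B‖ + 4 * C ^ 2 / δ := add_le_add (hB.norm_sub_inv_trace_smul_le s) hupdate

theorem stmt7 {n r : ℕ} (δ C : ℝ) (hδ : 0 < δ) (hC : 0 < C)
    -- `B` is symmetric positive semidefinite
    (B : Matrix (Fin n) (Fin n) ℝ) (hB : B.PosSemidef)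
    (s ybar : Matrix (Fin n) (Fin r) ℝ)
    (h1 : 0 < (sᵀ * B * s).trace)
    (h2 : 0.25 * δ * fnorm s ^ 2 ≤ (sᵀ * ybar).trace)
    (h3 : 0 < 0.25 * δ * fnorm s ^ 2)
    (h4 : fnorm ybar ≤ C * fnorm s) :
    ‖B - ((sᵀ * B * s).trace)⁻¹ • (B * s * (B * s)ᵀ)
        + ((sᵀ * ybar).trace)⁻¹ • (ybar * ybarᵀ)‖ ≤ ‖B‖ + 4 * C ^ 2 / δ :=
  stmt7_general δ C B hB s ybar h2 h3 h4
end

section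
/- Let δ, C > 0, let H ∈ ℝ^{n×n} be symmetric, and let s, ȳ ∈ ℝ^{n×r} satisfy tr(sᵀȳ) ≥ 0.25 δ‖s‖² > 0 and ‖ȳ‖ ≤ C‖s‖; set ρ̄ := 1/tr(sᵀȳ). Then the inverse BFGS-updated matrix H⁺ := (I − ρ̄ s ȳᵀ) H (I − ρ̄ ȳ sᵀ) + ρ̄ s sᵀ satisfies ‖H⁺‖₂ ≤ (1 + 4C/δ)² ‖H‖₂ + 4/δ, where ‖·‖₂ denotes the spectral (operator 2-) norm. -/
open Matrix
open scoped Matrix.Norms.L2Operator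
/-!
Each factor `I - ρ̄ s ȳᵀ` is a perturbation of the identity by a matrix of spectral norm at most
`ρ̄ ‖s‖ ‖ȳ‖ ≤ 4C/δ`, because the spectral norm is dominated by the Frobenius norm and
`ρ̄ ≤ 4 / (δ ‖s‖²)`; likewise `‖ρ̄ s sᵀ‖₂ ≤ ρ̄ ‖s‖² ≤ 4/δ`. Submultiplicativity and the triangle
inequality then give the bound.
-/

section Frobenius

variable {m n r : ℕ}

lemma trace_transpose_mul_self_eq_sum (A : Matrix (Fin n) (Fin r) ℝ) :
    (Aᵀ * A).trace = ∑ i, ∑ j, A i j ^ 2 := by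
  simp only [trace, diag, mul_apply, transpose_apply, sq]
  exact Finset.sum_comm

lemma fnorm_nonneg (A : Matrix (Fin n) (Fin r) ℝ) : 0 ≤ fnorm A :=
  Real.sqrt_nonneg _

lemma fnorm_sq (A : Matrix (Fin n) (Fin r) ℝ) : fnorm A ^ 2 = ∑ i, ∑ j, A i j ^ 2 := by
  rw [fnorm, trace_transpose_mul_self_eq_sum, Real.sq_sqrt (by positivity)]

lemma fnorm_transpose (A : Matrix (Fin n) (Fin r) ℝ) : fnorm Aᵀ = fnorm A := by
  rw [fnorm, fnorm, transpose_transpose, trace_mul_comm]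

-- Cauchy–Schwarz on each row.
lemma l2_opNorm_le_fnorm (A : Matrix (Fin n) (Fin r) ℝ) : ‖A‖ ≤ fnorm A := by
  refine ContinuousLinearMap.opNorm_le_bound _ (fnorm_nonneg A) fun x => ?_
  refine (pow_le_pow_iff_left₀ (norm_nonneg _) (mul_nonneg (fnorm_nonneg A) (norm_nonneg x))
    two_ne_zero).mp ?_
  simp only [LinearEquiv.trans_apply, LinearMap.coe_toContinuousLinearMap', ofLp_toLpLin,
    toLin'_apply, EuclideanSpace.norm_sq_eq, Real.norm_eq_abs, sq_abs, mul_pow, fnorm_sq,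
    Finset.sum_mul, mulVec, dotProduct]
  exact Finset.sum_le_sum fun i _ => (Finset.sum_mul_sq_le_sq_mul_sq _ (A i) x).trans_eq
    (Finset.sum_mul ..)

lemma l2_opNorm_mul_transpose_le (A : Matrix (Fin n) (Fin r) ℝ) (B : Matrix (Fin m) (Fin r) ℝ) :
    ‖A * Bᵀ‖ ≤ fnorm A * fnorm B :=
  calc ‖A * Bᵀ‖ ≤ ‖A‖ * ‖Bᵀ‖ := l2_opNorm_mul A Bᵀ
    _ ≤ fnorm A * fnorm B := by
      rw [← fnorm_transpose B]
      exact mul_le_mul (l2_opNorm_le_fnorm A) (l2_opNorm_le_fnorm Bᵀ) (norm_nonneg _)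
        (fnorm_nonneg A)

end Frobenius

lemma l2_opNorm_one_le (n : ℕ) : ‖(1 : Matrix (Fin n) (Fin n) ℝ)‖ ≤ 1 := by
  rw [cstar_norm_def, map_one]
  exact ContinuousLinearMap.norm_id_le

lemma l2_opNorm_one_sub_smul_le {n : ℕ} {c : ℝ} (hc : 0 ≤ c) (X : Matrix (Fin n) (Fin n) ℝ) :
    ‖1 - c • X‖ ≤ 1 + c * ‖X‖ :=
  calc ‖1 - c • X‖ ≤ ‖(1 : Matrix (Fin n) (Fin n) ℝ)‖ + ‖c • X‖ := norm_sub_le _ _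
    _ ≤ 1 + c * ‖X‖ := by
      rw [norm_smul, Real.norm_of_nonneg hc]
      gcongr
      exact l2_opNorm_one_le n

lemma inv_mul_sq_le_of_curvature {δ a t : ℝ} (hδ : 0 < δ) (hpos : 0 < 0.25 * δ * a ^ 2)
    (ht : 0.25 * δ * a ^ 2 ≤ t) : t⁻¹ * a ^ 2 ≤ 4 / δ := by
  rw [inv_mul_le_iff₀ (hpos.trans_le ht)]
  calc a ^ 2 = 4 / δ * (0.25 * δ * a ^ 2) := by field_simp; norm_num; ring
    _ ≤ 4 / δ * t := by gcongr
    _ = t * (4 / δ) := mul_comm _ _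

theorem stmt8_general {n r : ℕ} (δ C : ℝ) (hδ : 0 < δ) (hC : 0 < C)
    (H : Matrix (Fin n) (Fin n) ℝ)
    (s ybar : Matrix (Fin n) (Fin r) ℝ)
    (h1 : 0.25 * δ * fnorm s ^ 2 ≤ (sᵀ * ybar).trace)
    (h2 : 0 < 0.25 * δ * fnorm s ^ 2)
    (h3 : fnorm ybar ≤ C * fnorm s)
    (ρ : ℝ) (hρ : ρ = ((sᵀ * ybar).trace)⁻¹) :
    ‖(1 - ρ • (s * ybarᵀ)) * H * (1 - ρ • (ybar * sᵀ)) + ρ • (s * sᵀ)‖ ≤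
      (1 + 4 * C / δ) ^ 2 * ‖H‖ + 4 / δ := by
  have hρ0 : 0 ≤ ρ := hρ ▸ inv_nonneg.mpr (h2.le.trans h1)
  have hρs : ρ * fnorm s ^ 2 ≤ 4 / δ := hρ ▸ inv_mul_sq_le_of_curvature hδ h2 h1
  have hρsy : ρ * (fnorm s * fnorm ybar) ≤ 4 * C / δ :=
    calc ρ * (fnorm s * fnorm ybar) ≤ ρ * (fnorm s * (C * fnorm s)) := by
          gcongr; exact fnorm_nonneg s
      _ = C * (ρ * fnorm s ^ 2) := by ring
      _ ≤ C * (4 / δ) := by gcongr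
      _ = 4 * C / δ := by ring
  have hfactor : ∀ X : Matrix (Fin n) (Fin n) ℝ, ‖X‖ ≤ fnorm s * fnorm ybar →
      ‖1 - ρ • X‖ ≤ 1 + 4 * C / δ := fun X hX =>
    (l2_opNorm_one_sub_smul_le hρ0 X).trans <| by
      gcongr; exact (mul_le_mul_of_nonneg_left hX hρ0).trans hρsy
  have hcorr : ‖ρ • (s * sᵀ)‖ ≤ 4 / δ :=
    calc ‖ρ • (s * sᵀ)‖ = ρ * ‖s * sᵀ‖ := by rw [norm_smul, Real.norm_of_nonneg hρ0]
      _ ≤ ρ * fnorm s ^ 2 := by rw [sq]; gcongr; exact l2_opNorm_mul_transpose_le s s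
      _ ≤ 4 / δ := hρs
  calc _ ≤ ‖1 - ρ • (s * ybarᵀ)‖ * ‖H‖ * ‖1 - ρ • (ybar * sᵀ)‖ + ‖ρ • (s * sᵀ)‖ :=
        (norm_add_le _ _).trans <| by gcongr; exact norm_mul₃_le
    _ ≤ (1 + 4 * C / δ) * ‖H‖ * (1 + 4 * C / δ) + 4 / δ := by
        gcongr
        · exact hfactor _ (l2_opNorm_mul_transpose_le s ybar)
        · exact hfactor _ ((l2_opNorm_mul_transpose_le ybar s).trans_eq (mul_comm _ _))
    _ = (1 + 4 * C / δ) ^ 2 * ‖H‖ + 4 / δ := by ring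

theorem stmt8 {n r : ℕ} (δ C : ℝ) (hδ : 0 < δ) (hC : 0 < C)
    -- `H` is symmetric
    (H : Matrix (Fin n) (Fin n) ℝ) (hH : H.IsSymm)
    (s ybar : Matrix (Fin n) (Fin r) ℝ)
    (h1 : 0.25 * δ * fnorm s ^ 2 ≤ (sᵀ * ybar).trace)
    (h2 : 0 < 0.25 * δ * fnorm s ^ 2)
    (h3 : fnorm ybar ≤ C * fnorm s)
    (ρ : ℝ) (hρ : ρ = ((sᵀ * ybar).trace)⁻¹) :
    ‖(1 - ρ • (s * ybarᵀ)) * H * (1 - ρ • (ybar * sᵀ)) + ρ • (s * sᵀ)‖ ≤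
      (1 + 4 * C / δ) ^ 2 * ‖H‖ + 4 / δ :=
  stmt8_general δ C hδ hC H s ybar h1 h2 h3 ρ hρ
end

section
/- Let f : ℝ^{n×r} → ℝ be continuously differentiable with L-Lipschitz gradient and h : ℝ^{n×r} → ℝ convex and L_h-Lipschitz; set F := f + h. Let 0 < κ₁ ≤ κ₂, σ ∈ (0,1), c₀ > 0, M₁, M₂ > 0, and let m be a nonnegative integer. Suppose sequences X_k ∈ St(n,r), V_k ∈ T_{X_k}, α_k ∈ [c₀,1], and self-adjoint linear maps B_k : ℝ^{n×r} → ℝ^{n×r} mapping T_{X_k} into itself satisfy for all k: (i) κ₁‖V‖² ≤ ⟨V, B_k V⟩ ≤ κ₂‖V‖² for all V ∈ T_{X_k}; (ii) V_k minimizes φ_k(V) := ⟨∇f(X_k),V⟩ + (1/2)⟨V, B_k V⟩ + h(X_k+V) over T_{X_k}; (iii) ‖X_{k+1} − X_k‖ ≤ M₁‖α_k V_k‖ and ‖X_{k+1} − X_k − α_k V_k‖ ≤ M₂‖α_k V_k‖²; (iv) F(X_{k+1}) ≤ max_{max(k−m,0) ≤ j ≤ k} F(X_j) − (σ/2) α_k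 ⟨V_k, B_k V_k⟩. Suppose further that X_k converges to X* ∈ St(n,r) and that there exist an index K₀, a constant η > L_h M₂, and vectors W_k ∈ T_{X_k} for k ≥ K₀ such that ‖X* − X_k − W_k‖ ≤ M₂‖W_k‖², F(X_k) − F(X*) ≥ η‖W_k‖², and f(X*) − f(X_k) ≥ ⟨∇f(X_k), W_k⟩. Then there exist an integer K ≥ K₀, μ > 0, and τ ∈ (0,1) such that F(X_k) − F(X*) ≤ μ τ^{k−K} (max_{max(K−m,0) ≤ j ≤ K} F(X_j) − F(X*)) for all k > K. -/
open Matrix Filter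

-- The norm `‖·‖` (and the topology) below come from the Frobenius norm,
-- associated to the trace inner product.
attribute [local instance] Matrix.frobeniusNormedAddCommGroup Matrix.frobeniusNormedSpace

open Set
open scoped InnerProductSpace

/-!
Write `Δ k = F (X k) - F X*`, `Γ k` for the maximum of `Δ j` over the window `k - m ≤ j ≤ k`, and
`D k = h (X k) - h (X k + V k) - ⟪∇f (X k), V k⟫` for the decrease predicted by the model. For
`k ≥ K₀` three estimates hold:
* the descent lemma for `f` and convexity of `h` give `Δ (k+1) ≤ Δ k - α k D k + O(‖V k‖²)`;
* comparing `V k` with `V k + t (W k - V k)` in the subproblem, for a small fixed `t`, gives the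
  error bound `a Δ k ≤ D k + O(‖V k‖²)` with `a > 0`; this is where `η > L_h M₂` enters;
* the line search condition gives `β ‖V k‖² ≤ Γ k - Δ (k+1)`.
Eliminating `D k` and `‖V k‖²` yields `Δ (k+1) ≤ ρ Γ k` with `ρ < 1`, hence `Γ` contracts by `ρ`
over every `m + 1` consecutive steps, which is the R-linear rate.
-/

theorem tinner_eq_sum {n r : ℕ} (A B : Matrix (Fin n) (Fin r) ℝ) :
    tinner A B = ∑ i, ∑ j, A i j * B i j := by
  rw [tinner, trace, Finset.sum_comm]
  simp [mul_apply]

theorem frobenius_norm_sq_eq_sum {n r : ℕ} (A : Matrix (Fin n) (Fin r) ℝ) :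
    ‖A‖ ^ 2 = ∑ i, ∑ j, A i j ^ 2 := by
  change ‖WithLp.toLp 2 fun i => WithLp.toLp 2 fun j => A i j‖ ^ 2 = _
  simp [PiLp.norm_sq_eq_of_L2]

@[reducible]
noncomputable def frobeniusInnerProductSpace {n r : ℕ} :
    InnerProductSpace ℝ (Matrix (Fin n) (Fin r) ℝ) where
  __ := Matrix.frobeniusNormedSpace
  inner := tinner
  norm_sq_eq_re_inner A := by
    rw [frobenius_norm_sq_eq_sum, RCLike.re_to_real, tinner_eq_sum]
    simp only [sq]
  conj_inner_symm A B := by simp [tinner_eq_sum, mul_comm]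
  add_left A B C := by simp [tinner, Matrix.add_mul]
  smul_left A B c := by simp [tinner]

attribute [local instance] frobeniusInnerProductSpace

def tangentSpace {n r : ℕ} (X : Matrix (Fin n) (Fin r) ℝ) :
    Submodule ℝ (Matrix (Fin n) (Fin r) ℝ) where
  carrier := {V | IsTangent X V}
  add_mem' {V U} (hV : IsTangent X V) (hU : IsTangent X U) := show IsTangent X (V + U) by
    rw [IsTangent, transpose_add, Matrix.add_mul, Matrix.mul_add, add_add_add_comm, hV, hU,
      add_zero]
  zero_mem' := show IsTangent X 0 by simp [IsTangent]
  smul_mem' c V (hV : IsTangent X V) := show IsTangent X (c • V) by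
    rw [IsTangent, transpose_smul, Matrix.smul_mul, Matrix.mul_smul, ← smul_add, hV, smul_zero]

theorem nonneg_of_norm_sub_le_mul {E F : Type*} [NormedAddCommGroup E] [Nontrivial E]
    [SeminormedAddCommGroup F] {φ : E → F} {L : ℝ} (hφ : ∀ a b, ‖φ a - φ b‖ ≤ L * ‖a - b‖) :
    0 ≤ L := by
  obtain ⟨a, ha⟩ := exists_ne (0 : E)
  have := (norm_nonneg _).trans (hφ a 0)
  rw [sub_zero] at this
  exact nonneg_of_mul_nonneg_left this (norm_pos_iff.2 ha)

theorem exists_norm_comp_le_of_tendsto {E F : Type*} [SeminormedAddCommGroup E]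
    [SeminormedAddCommGroup F] {φ : E → F} {L : ℝ} (hφ : ∀ a b, ‖φ a - φ b‖ ≤ L * ‖a - b‖)
    (hL : 0 ≤ L) {X : ℕ → E} {x : E} (hX : Filter.Tendsto X Filter.atTop (nhds x)) :
    ∃ G, ∀ k, ‖φ (X k)‖ ≤ G := by
  obtain ⟨R, hR⟩ := (Metric.isBounded_range_of_tendsto X hX).exists_norm_le
  refine ⟨‖φ 0‖ + L * R, fun k => ?_⟩
  calc ‖φ (X k)‖ ≤ ‖φ 0‖ + ‖φ (X k) - φ 0‖ := norm_le_norm_add_norm_sub' _ _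
    _ ≤ ‖φ 0‖ + L * ‖X k‖ := by simpa using hφ (X k) 0
    _ ≤ ‖φ 0‖ + L * R := by gcongr; exact hR _ (mem_range_self k)

section InnerProductSpace

variable {E : Type*} [NormedAddCommGroup E] [InnerProductSpace ℝ E]

theorem sub_sub_inner_le_of_lipschitz_gradient {f : E → ℝ} {g : E → E} {L : ℝ}
    (hf : ∀ z, HasFDerivAt f (innerSL ℝ (g z)) z) (hg : ∀ a b, ‖g a - g b‖ ≤ L * ‖a - b‖)
    (hL : 0 ≤ L) (x y : E) :
    f y - f x - ⟪g x, y - x⟫_ℝ ≤ L * ‖y - x‖ ^ 2 := by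
  have hbound : ∀ z ∈ Metric.closedBall x ‖y - x‖,
      ‖innerSL ℝ (g z) - innerSL ℝ (g x)‖ ≤ L * ‖y - x‖ := fun z hz => by
    rw [← map_sub, innerSL_apply_norm]
    calc ‖g z - g x‖ ≤ L * ‖z - x‖ := hg z x
      _ ≤ L * ‖y - x‖ := by gcongr; simpa [dist_eq_norm] using hz
  have := (convex_closedBall x ‖y - x‖).norm_image_sub_le_of_norm_hasFDerivWithin_le'
    (fun z _ => (hf z).hasFDerivWithinAt) hbound (Metric.mem_closedBall_self (norm_nonneg _))
    (show y ∈ Metric.closedBall x ‖y - x‖ by simp [dist_eq_norm])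
  rw [innerSL_apply_apply] at this
  linarith [Real.le_norm_self (f y - f x - ⟪g x, y - x⟫_ℝ)]

noncomputable def proxModel (h : E → ℝ) (B : E →ₗ[ℝ] E) (x c v : E) : ℝ :=
  ⟪c, v⟫_ℝ + 1 / 2 * ⟪v, B v⟫_ℝ + h (x + v)

noncomputable def modelDecrease (h : E → ℝ) (x c v : E) : ℝ :=
  h x - h (x + v) - ⟪c, v⟫_ℝ

variable {T : Submodule ℝ E} {B : E →ₗ[ℝ] E} {h : E → ℝ} {x c v : E}

theorem modelDecrease_nonneg_of_isMinOn (hmin : IsMinOn (proxModel h B x c) T v)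
    (hq : 0 ≤ ⟪v, B v⟫_ℝ) : 0 ≤ modelDecrease h x c v := by
  have : proxModel h B x c v ≤ proxModel h B x c 0 := hmin T.zero_mem
  simp only [proxModel, inner_zero_right, map_zero, mul_zero, add_zero] at this
  rw [modelDecrease]
  linarith

theorem two_mul_inner_le_of_nonneg_on (hB : B.IsSymmetric) (hq : ∀ u ∈ T, 0 ≤ ⟪u, B u⟫_ℝ)
    {u u' : E} (hu : u ∈ T) (hu' : u' ∈ T) {s : ℝ} (hs : 0 < s) :
    2 * ⟪B u, u'⟫_ℝ ≤ s⁻¹ * ⟪u, B u⟫_ℝ + s * ⟪u', B u'⟫_ℝ := by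
  have := hq _ (T.sub_mem hu (T.smul_mem s hu'))
  simp only [map_sub, map_smul, inner_sub_left, inner_sub_right, real_inner_smul_left,
    real_inner_smul_right] at this
  rw [real_inner_comm (B u) u', ← hB u u'] at this
  refine le_of_mul_le_mul_left ?_ hs
  rw [mul_add, ← mul_assoc s s⁻¹, mul_inv_cancel₀ hs.ne', one_mul]
  linarith

theorem inner_add_le_of_isMinOn_proxModel (hB : B.IsSymmetric) (hconv : ConvexOn ℝ univ h)
    (hmin : IsMinOn (proxModel h B x c) T v) (hv : v ∈ T) {w : E} (hw : w ∈ T) {t : ℝ}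
    (ht0 : 0 < t) (ht1 : t ≤ 1) :
    ⟪c, v⟫_ℝ + h (x + v) ≤
      ⟪c, w⟫_ℝ + h (x + w) + ⟪B v, w - v⟫_ℝ + t / 2 * ⟪w - v, B (w - v)⟫_ℝ := by
  have hcvx : h (x + (v + t • (w - v))) ≤ (1 - t) * h (x + v) + t * h (x + w) := by
    have := hconv.2 (mem_univ (x + v)) (mem_univ (x + w)) (sub_nonneg.2 ht1) ht0.le (by ring)
    rwa [show (1 - t) • (x + v) + t • (x + w) = x + (v + t • (w - v)) by module, smul_eq_mul,
      smul_eq_mul] at this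
  have hle : proxModel h B x c v ≤ proxModel h B x c (v + t • (w - v)) :=
    hmin (T.add_mem hv (T.smul_mem t (T.sub_mem hw hv)))
  set u := w - v
  simp only [proxModel, map_add, map_smul, inner_add_left, inner_add_right, real_inner_smul_left,
    real_inner_smul_right] at hle
  rw [real_inner_comm (B v) u, ← hB v u] at hle
  have hcu : t * ⟪c, u⟫_ℝ = t * ⟪c, w⟫_ℝ - t * ⟪c, v⟫_ℝ := by rw [inner_sub_right, mul_sub]
  refine le_of_mul_le_mul_left ?_ ht0
  nlinarith

theorem one_step_descent {f : E → ℝ} {g : E → E} {L Lh G M₁ M₂ α : ℝ} {x' : E}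
    (hf : ∀ z, HasFDerivAt f (innerSL ℝ (g z)) z) (hg : ∀ a b, ‖g a - g b‖ ≤ L * ‖a - b‖)
    (hL : 0 ≤ L) (hconv : ConvexOn ℝ univ h) (hh : ∀ a b, |h a - h b| ≤ Lh * ‖a - b‖)
    (hLh : 0 ≤ Lh) (hG : ‖g x‖ ≤ G) (hM₂ : 0 ≤ M₂) (hα0 : 0 ≤ α) (hα1 : α ≤ 1)
    (h₁ : ‖x' - x‖ ≤ M₁ * ‖α • v‖) (h₂ : ‖x' - x - α • v‖ ≤ M₂ * ‖α • v‖ ^ 2) :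
    f x' + h x' ≤ f x + h x - α * modelDecrease h x (g x) v +
      (G * M₂ + L * M₁ ^ 2 + Lh * M₂) * ‖v‖ ^ 2 := by
  have hαv : ‖α • v‖ ≤ ‖v‖ := by
    rw [norm_smul, Real.norm_eq_abs, abs_of_nonneg hα0]
    exact mul_le_of_le_one_left (norm_nonneg v) hα1
  have hR : ‖x' - x - α • v‖ ≤ M₂ * ‖v‖ ^ 2 := h₂.trans (by gcongr)
  have hf' : f x' ≤ f x + α * ⟪g x, v⟫_ℝ + G * (M₂ * ‖v‖ ^ 2) + L * (M₁ ^ 2 * ‖v‖ ^ 2) := by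
    have hlin : ⟪g x, x' - x⟫_ℝ ≤ α * ⟪g x, v⟫_ℝ + G * (M₂ * ‖v‖ ^ 2) :=
      calc ⟪g x, x' - x⟫_ℝ = α * ⟪g x, v⟫_ℝ + ⟪g x, x' - x - α • v⟫_ℝ := by
            simp only [inner_sub_right, real_inner_smul_right]; ring
        _ ≤ α * ⟪g x, v⟫_ℝ + ‖g x‖ * ‖x' - x - α • v‖ := by
            gcongr; exact real_inner_le_norm _ _
        _ ≤ α * ⟪g x, v⟫_ℝ + G * (M₂ * ‖v‖ ^ 2) := by
            gcongr; exact (norm_nonneg _).trans hG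
    have hquad : ‖x' - x‖ ^ 2 ≤ M₁ ^ 2 * ‖v‖ ^ 2 :=
      calc ‖x' - x‖ ^ 2 ≤ (M₁ * ‖α • v‖) ^ 2 := pow_le_pow_left₀ (norm_nonneg _) h₁ 2
        _ = M₁ ^ 2 * ‖α • v‖ ^ 2 := by ring
        _ ≤ M₁ ^ 2 * ‖v‖ ^ 2 := by gcongr
    linarith [sub_sub_inner_le_of_lipschitz_gradient hf hg hL x x',
      mul_le_mul_of_nonneg_left hquad hL]
  have hh' : h x' ≤ (1 - α) * h x + α * h (x + v) + Lh * (M₂ * ‖v‖ ^ 2) := by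
    have hLip : h x' - h (x + α • v) ≤ Lh * ‖x' - x - α • v‖ := by
      rw [sub_sub x' x]
      exact (le_abs_self _).trans (hh x' (x + α • v))
    have hcvx : h (x + α • v) ≤ (1 - α) * h x + α * h (x + v) := by
      have := hconv.2 (mem_univ x) (mem_univ (x + v)) (sub_nonneg.2 hα1) hα0 (by ring)
      rwa [show (1 - α) • x + α • (x + v) = x + α • v by module, smul_eq_mul, smul_eq_mul] at this
    linarith [mul_le_mul_of_nonneg_left hR hLh]
  rw [modelDecrease]
  linarith

theorem error_bound {f : E → ℝ} {κ₂ Lh M₂ η t : ℝ} {xs w : E} (hB : B.IsSymmetric)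
    (hq0 : ∀ u ∈ T, 0 ≤ ⟪u, B u⟫_ℝ) (hqκ : ∀ u ∈ T, ⟪u, B u⟫_ℝ ≤ κ₂ * ‖u‖ ^ 2) (hκ₂ : 0 ≤ κ₂)
    (hconv : ConvexOn ℝ univ h) (hh : ∀ a b, |h a - h b| ≤ Lh * ‖a - b‖) (hLh : 0 ≤ Lh)
    (hM₂ : 0 ≤ M₂) (hη : 0 < η) (ht0 : 0 < t) (ht1 : t ≤ 1)
    (hmin : IsMinOn (proxModel h B x c) T v) (hv : v ∈ T) (hw : w ∈ T)
    (hw₁ : ‖xs - x - w‖ ≤ M₂ * ‖w‖ ^ 2) (hw₂ : η * ‖w‖ ^ 2 ≤ f x + h x - (f xs + h xs))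
    (hw₃ : ⟪c, w⟫_ℝ ≤ f xs - f x) :
    (1 - (2 * t * κ₂ + Lh * M₂) / η) * (f x + h x - (f xs + h xs)) ≤
      modelDecrease h x c v + (κ₂ / (2 * t) + 2 * t * κ₂) * ‖v‖ ^ 2 := by
  have hgap : f x + h x - (f xs + h xs) ≤
      h x - h (x + w) - ⟪c, w⟫_ℝ + Lh * (M₂ * ‖w‖ ^ 2) := by
    have := (le_abs_self _).trans (hh (x + w) xs)
    rw [show x + w - xs = -(xs - x - w) by abel, norm_neg] at this
    linarith [mul_le_mul_of_nonneg_left hw₁ hLh]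
  have hvar := inner_add_le_of_isMinOn_proxModel hB hconv hmin hv hw ht0 ht1
  have hcross := two_mul_inner_le_of_nonneg_on hB hq0 hv (T.sub_mem hw hv) ht0
  have hsub : ‖w - v‖ ^ 2 ≤ 2 * ‖w‖ ^ 2 + 2 * ‖v‖ ^ 2 := by
    nlinarith [norm_sub_le w v, norm_nonneg (w - v), sq_nonneg (‖w‖ - ‖v‖)]
  have hq : ⟪w - v, B (w - v)⟫_ℝ ≤ κ₂ * (2 * ‖w‖ ^ 2 + 2 * ‖v‖ ^ 2) :=
    (hqκ _ (T.sub_mem hw hv)).trans (by gcongr)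
  have hqv : t⁻¹ * ⟪v, B v⟫_ℝ ≤ t⁻¹ * (κ₂ * ‖v‖ ^ 2) := by gcongr; exact hqκ v hv
  have hW : (2 * t * κ₂ + Lh * M₂) * ‖w‖ ^ 2 ≤
      (2 * t * κ₂ + Lh * M₂) / η * (f x + h x - (f xs + h xs)) := by
    rw [div_mul_eq_mul_div, le_div_iff₀ hη]
    nlinarith [mul_le_mul_of_nonneg_left hw₂ (by positivity : 0 ≤ 2 * t * κ₂ + Lh * M₂)]
  have e : κ₂ / (2 * t) = t⁻¹ * κ₂ / 2 := by field_simp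
  rw [modelDecrease, e]
  nlinarith [mul_le_mul_of_nonneg_left hq ht0.le]

end InnerProductSpace

section WindowMax

noncomputable def windowMax (F : ℕ → ℝ) (m k : ℕ) : ℝ :=
  (Finset.Icc (k - m) k).sup' (Finset.nonempty_Icc.mpr (Nat.sub_le k m)) F

theorem self_le_windowMax (F : ℕ → ℝ) (m k : ℕ) : F k ≤ windowMax F m k :=
  Finset.le_sup' F (Finset.mem_Icc.2 ⟨Nat.sub_le k m, le_rfl⟩)

theorem exists_eq_windowMax (F : ℕ → ℝ) (m k : ℕ) :
    ∃ j, k - m ≤ j ∧ j ≤ k ∧ windowMax F m k = F j := by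
  obtain ⟨j, hj, hjeq⟩ := Finset.exists_mem_eq_sup' (Finset.nonempty_Icc.mpr (Nat.sub_le k m)) F
  exact ⟨j, (Finset.mem_Icc.1 hj).1, (Finset.mem_Icc.1 hj).2, hjeq⟩

theorem windowMax_antitone {F : ℕ → ℝ} {m : ℕ} (hF : ∀ k, F (k + 1) ≤ windowMax F m k) :
    Antitone (windowMax F m) :=
  antitone_nat_of_succ_le fun k => Finset.sup'_le _ _ fun j hj => by
    obtain ⟨hj₁, hj₂⟩ := Finset.mem_Icc.1 hj
    rcases hj₂.lt_or_eq with hj₂ | rfl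
    · exact Finset.le_sup' F (Finset.mem_Icc.2 ⟨by omega, by omega⟩)
    · exact hF k

theorem windowMax_add_succ_sub_le {F : ℕ → ℝ} {m K k : ℕ} {Fs ρ : ℝ} (hρ : 0 ≤ ρ)
    (hanti : Antitone (windowMax F m))
    (hstep : ∀ i, K ≤ i → F (i + 1) - Fs ≤ ρ * (windowMax F m i - Fs)) (hk : K ≤ k) :
    windowMax F m (k + (m + 1)) - Fs ≤ ρ * (windowMax F m k - Fs) := by
  obtain ⟨j, hj₁, hj₂, hj⟩ := exists_eq_windowMax F m (k + (m + 1))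
  obtain ⟨i, rfl⟩ : ∃ i, j = i + 1 := ⟨j - 1, by omega⟩
  rw [hj]
  calc F (i + 1) - Fs ≤ ρ * (windowMax F m i - Fs) := hstep i (by omega)
    _ ≤ ρ * (windowMax F m k - Fs) := by gcongr; exact hanti (by omega)

end WindowMax

theorem exists_geometric_bound {u : ℕ → ℝ} {ρ : ℝ} {p K : ℕ} (hp : 0 < p) (hρ0 : 0 ≤ ρ)
    (hρ1 : ρ < 1) (hu : Antitone u) (huK : 0 ≤ u K)
    (hcontr : ∀ k, K ≤ k → u (k + p) ≤ ρ * u k) :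
    ∃ μ τ : ℝ, 0 < μ ∧ τ ∈ Ioo 0 1 ∧ ∀ d, u (K + d) ≤ μ * τ ^ d * u K := by
  obtain ⟨τ, ⟨hρτ, hτ0⟩, hτ1⟩ : ∃ τ : ℝ, (ρ < τ ^ p ∧ 0 < τ) ∧ τ < 1 := by
    have : ∀ᶠ τ : ℝ in nhds 1, ρ < τ ^ p ∧ 0 < τ :=
      (((continuous_pow p).tendsto' 1 1 (one_pow p)).eventually (lt_mem_nhds hρ1)).and
        (lt_mem_nhds one_pos)
    exact ((eventually_nhdsWithin_of_eventually_nhds this).and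
      (self_mem_nhdsWithin (s := Iio 1))).exists
  refine ⟨(τ ^ p)⁻¹, τ, by positivity, ⟨hτ0, hτ1⟩, fun d => ?_⟩
  induction d using Nat.strong_induction_on with
  | _ d ih =>
    rcases lt_or_ge d p with hd | hd
    · calc u (K + d) ≤ u K := hu (by omega)
        _ ≤ (τ ^ p)⁻¹ * τ ^ d * u K := by
          refine le_mul_of_one_le_left huK ?_
          rw [inv_mul_eq_div, one_le_div (by positivity)]
          exact pow_le_pow_of_le_one hτ0.le hτ1.le hd.le
    · obtain ⟨d, rfl⟩ := Nat.exists_eq_add_of_le hd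
      have hbound : 0 ≤ (τ ^ p)⁻¹ * τ ^ d * u K := by positivity
      calc u (K + (p + d)) = u (K + d + p) := by rw [add_comm p, add_assoc]
        _ ≤ ρ * u (K + d) := hcontr _ (by omega)
        _ ≤ ρ * ((τ ^ p)⁻¹ * τ ^ d * u K) := by gcongr; exact ih d (by omega)
        _ ≤ τ ^ p * ((τ ^ p)⁻¹ * τ ^ d * u K) := by gcongr
        _ = (τ ^ p)⁻¹ * τ ^ (p + d) * u K := by
          rw [pow_add]; field_simp

theorem nonmonotone_linear_convergence {F e : ℕ → ℝ} {Fs β a C : ℝ} {m K : ℕ} (hβ : 0 < β)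
    (ha : 0 < a) (ha1 : a ≤ 1) (hC : 0 ≤ C) (he : ∀ k, 0 ≤ e k) (hFs : ∀ k, K ≤ k → Fs ≤ F k)
    (hsuff : ∀ k, F (k + 1) ≤ windowMax F m k - β * e k)
    (hcontr : ∀ k, K ≤ k → a * (F k - Fs) ≤ F k - F (k + 1) + C * e k) :
    ∃ μ τ : ℝ, 0 < μ ∧ τ ∈ Ioo 0 1 ∧
      ∀ k, K ≤ k → F k - Fs ≤ μ * τ ^ (k - K) * (windowMax F m K - Fs) := by
  set θ := C / β
  set ρ := (1 - a + θ) / (1 + θ)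
  have hθ : 0 ≤ θ := div_nonneg hC hβ.le
  have hanti : Antitone (windowMax F m) :=
    windowMax_antitone fun k => (hsuff k).trans (sub_le_self _ (mul_nonneg hβ.le (he k)))
  have hstep : ∀ i, K ≤ i → F (i + 1) - Fs ≤ ρ * (windowMax F m i - Fs) := by
    intro i hi
    have hCe : C * e i ≤ θ * (windowMax F m i - F (i + 1)) :=
      calc C * e i = θ * (β * e i) := by rw [← mul_assoc, div_mul_cancel₀ C hβ.ne']
        _ ≤ θ * (windowMax F m i - F (i + 1)) := by gcongr; linarith [hsuff i]
    have hΔΓ : (1 - a) * (F i - Fs) ≤ (1 - a) * (windowMax F m i - Fs) :=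
      mul_le_mul_of_nonneg_left (by linarith [self_le_windowMax F m i]) (by linarith)
    -- `(1 + θ) Δ (i+1) ≤ (1 - a) Δ i + θ Γ i ≤ (1 - a + θ) Γ i`
    rw [div_mul_eq_mul_div, le_div_iff₀ (by positivity)]
    nlinarith [hcontr i hi]
  have hρ0 : 0 ≤ ρ := div_nonneg (by linarith) (by positivity)
  have hρ1 : ρ < 1 := by rw [div_lt_one (by positivity)]; linarith
  obtain ⟨μ, τ, hμ, hτ, hbound⟩ := exists_geometric_bound (u := fun k => windowMax F m k - Fs)
    (Nat.succ_pos m) hρ0 hρ1 (fun i j hij => sub_le_sub_right (hanti hij) Fs)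
    (by linarith [hFs K le_rfl, self_le_windowMax F m K])
    (fun k hk => windowMax_add_succ_sub_le hρ0 hanti hstep hk)
  refine ⟨μ, τ, hμ, hτ, fun k hk => ?_⟩
  calc F k - Fs ≤ windowMax F m k - Fs := by linarith [self_le_windowMax F m k]
    _ = windowMax F m (K + (k - K)) - Fs := by rw [Nat.add_sub_cancel' hk]
    _ ≤ μ * τ ^ (k - K) * (windowMax F m K - Fs) := hbound (k - K)

theorem stmt12_general {n r : ℕ} (f h : Matrix (Fin n) (Fin r) ℝ → ℝ)
    -- `f` is continuously differentiable with gradient function `g = ∇f`, which is `L`-Lipschitz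
    (g : Matrix (Fin n) (Fin r) ℝ → Matrix (Fin n) (Fin r) ℝ)
    (Lf : Matrix (Fin n) (Fin r) ℝ → (Matrix (Fin n) (Fin r) ℝ →L[ℝ] ℝ))
    (hf : ∀ Z, HasFDerivAt f (Lf Z) Z) (hGrad : ∀ Z V, Lf Z V = tinner (g Z) V)
    (L Lh κ₁ κ₂ σ c₀ M₁ M₂ : ℝ) (m : ℕ)
    (hLipg : ∀ A B, ‖g A - g B‖ ≤ L * ‖A - B‖)
    -- `h` is convex and `L_h`-Lipschitz
    (hconv : ConvexOn ℝ Set.univ h)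
    (hLiph : ∀ A B, |h A - h B| ≤ Lh * ‖A - B‖)
    (hκ₁ : 0 < κ₁) (hκ₁₂ : κ₁ ≤ κ₂) (hσ : σ ∈ Set.Ioo (0 : ℝ) 1)
    (hc₀ : 0 < c₀) (hM₂ : 0 < M₂)
    -- the sequences
    (X V : ℕ → Matrix (Fin n) (Fin r) ℝ) (α : ℕ → ℝ)
    (B : ℕ → (Matrix (Fin n) (Fin r) ℝ →ₗ[ℝ] Matrix (Fin n) (Fin r) ℝ))
    (hVt : ∀ k, IsTangent (X k) (V k))
    (hα : ∀ k, α k ∈ Set.Icc c₀ 1)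
    -- each `B_k` is self-adjoint
    (hBsa : ∀ k U W, tinner U (B k W) = tinner (B k U) W)
    -- (i) uniform bounds on the quadratic form of `B_k` over `T_{X_k}`
    (hBbound : ∀ k W, IsTangent (X k) W →
      κ₁ * ‖W‖ ^ 2 ≤ tinner W (B k W) ∧ tinner W (B k W) ≤ κ₂ * ‖W‖ ^ 2)
    -- (ii) `V_k` minimizes `φ_k` over `T_{X_k}`
    (hmin : ∀ k W, IsTangent (X k) W →
      tinner (g (X k)) (V k) + (1 / 2) * tinner (V k) (B k (V k)) + h (X k + V k) ≤
        tinner (g (X k)) W + (1 / 2) * tinner W (B k W) + h (X k + W))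
    -- (iii)
    (hstep₁ : ∀ k, ‖X (k + 1) - X k‖ ≤ M₁ * ‖α k • V k‖)
    (hstep₂ : ∀ k, ‖X (k + 1) - X k - α k • V k‖ ≤ M₂ * ‖α k • V k‖ ^ 2)
    -- (iv) nonmonotone sufficient decrease
    (hdec : ∀ k, f (X (k + 1)) + h (X (k + 1)) ≤
      (Finset.Icc (k - m) k).sup' (Finset.nonempty_Icc.mpr (Nat.sub_le k m))
          (fun j => f (X j) + h (X j))
        - σ / 2 * α k * tinner (V k) (B k (V k)))
    -- `X_k` converges to `X*`
    (Xs : Matrix (Fin n) (Fin r) ℝ)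
    (hXconv : Tendsto X atTop (nhds Xs))
    -- the local structure hypotheses near `X*`
    (K₀ : ℕ) (η : ℝ) (hη : Lh * M₂ < η)
    (W : ℕ → Matrix (Fin n) (Fin r) ℝ)
    (hWt : ∀ k, K₀ ≤ k → IsTangent (X k) (W k))
    (hW₁ : ∀ k, K₀ ≤ k → ‖Xs - X k - W k‖ ≤ M₂ * ‖W k‖ ^ 2)
    (hW₂ : ∀ k, K₀ ≤ k → η * ‖W k‖ ^ 2 ≤ (f (X k) + h (X k)) - (f Xs + h Xs))
    (hW₃ : ∀ k, K₀ ≤ k → tinner (g (X k)) (W k) ≤ f Xs - f (X k)) :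
    ∃ K : ℕ, K₀ ≤ K ∧ ∃ μ τ : ℝ, 0 < μ ∧ τ ∈ Set.Ioo (0 : ℝ) 1 ∧
      ∀ k, K < k →
        (f (X k) + h (X k)) - (f Xs + h Xs) ≤
          μ * τ ^ (k - K) *
            ((Finset.Icc (K - m) K).sup' (Finset.nonempty_Icc.mpr (Nat.sub_le K m))
                (fun j => f (X j) + h (X j)) - (f Xs + h Xs)) := by
  rcases subsingleton_or_nontrivial (Matrix (Fin n) (Fin r) ℝ) with _ | _
  -- on the zero space `L`, `Lh` and `η` may be negative, but both sides vanish
  · exact ⟨K₀, le_rfl, 1, 1 / 2, one_pos, by norm_num, fun k _ => by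
      simp [Subsingleton.elim (X _) Xs]⟩
  have hL : 0 ≤ L := nonneg_of_norm_sub_le_mul hLipg
  have hLh : 0 ≤ Lh :=
    nonneg_of_norm_sub_le_mul (φ := h) fun a b => (Real.norm_eq_abs _).trans_le (hLiph a b)
  have hη0 : 0 < η := (mul_nonneg hLh hM₂.le).trans_lt hη
  have hκ₂ : 0 < κ₂ := hκ₁.trans_le hκ₁₂
  have hgrad : ∀ Z, HasFDerivAt f (innerSL ℝ (g Z)) Z := fun Z =>
    (hf Z).congr_fderiv (ContinuousLinearMap.ext (hGrad Z))
  have hsym : ∀ k, (B k).IsSymmetric := fun k U W => (hBsa k U W).symm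
  have hq0 : ∀ k, ∀ u ∈ tangentSpace (X k), 0 ≤ tinner u (B k u) := fun k u hu =>
    (mul_nonneg hκ₁.le (sq_nonneg _)).trans (hBbound k u hu).1
  have hmin' : ∀ k, IsMinOn (proxModel h (B k) (X k) (g (X k))) (tangentSpace (X k)) (V k) :=
    fun k W hW => hmin k W hW
  obtain ⟨G, hG⟩ := exists_norm_comp_le_of_tendsto hLipg hL hXconv
  obtain ⟨t, ht0, ht1, htη⟩ : ∃ t : ℝ, 0 < t ∧ t ≤ 1 ∧ 2 * t * κ₂ + Lh * M₂ < η := by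
    obtain ⟨t, ht0, ht⟩ := exists_pos_mul_lt (sub_pos.2 hη) (2 * κ₂)
    exact ⟨min t 1, lt_min ht0 one_pos, min_le_right t 1, by nlinarith [min_le_left t 1]⟩
  set a := 1 - (2 * t * κ₂ + Lh * M₂) / η
  have ha0 : 0 < a := sub_pos.2 ((div_lt_one hη0).2 htη)
  have ha1 : a ≤ 1 := sub_le_self _ (div_nonneg (by positivity) hη0.le)
  have hsuff : ∀ k, f (X (k + 1)) + h (X (k + 1)) ≤
      windowMax (fun j => f (X j) + h (X j)) m k - σ / 2 * c₀ * κ₁ * ‖V k‖ ^ 2 := fun k => by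
    rw [windowMax]
    nlinarith [hdec k, mul_nonneg (mul_nonneg hσ.1.le (sub_nonneg.2 (hα k).1)) (hq0 k _ (hVt k)),
      mul_nonneg (mul_nonneg hσ.1.le hc₀.le) (sub_nonneg.2 (hBbound k _ (hVt k)).1)]
  have hcontr : ∀ k, K₀ ≤ k → c₀ * a * (f (X k) + h (X k) - (f Xs + h Xs)) ≤
      f (X k) + h (X k) - (f (X (k + 1)) + h (X (k + 1))) +
        (G * M₂ + L * M₁ ^ 2 + Lh * M₂ + c₀ * (κ₂ / (2 * t) + 2 * t * κ₂)) * ‖V k‖ ^ 2 := by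
    intro k hk
    obtain ⟨hc₀α, hα1⟩ := hα k
    have hdesc := one_step_descent hgrad hLipg hL hconv hLiph hLh (hG k) hM₂.le
      (hc₀.le.trans hc₀α) hα1 (hstep₁ k) (hstep₂ k)
    have herr := error_bound (hsym k) (hq0 k) (fun u hu => (hBbound k u hu).2) hκ₂.le hconv
      hLiph hLh hM₂.le hη0 ht0 ht1 (hmin' k) (hVt k) (hWt k hk) (hW₁ k hk) (hW₂ k hk) (hW₃ k hk)
    have hD := modelDecrease_nonneg_of_isMinOn (hmin' k) (hq0 k _ (hVt k))
    nlinarith [mul_le_mul_of_nonneg_right hc₀α hD, mul_le_mul_of_nonneg_left herr hc₀.le]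
  obtain ⟨μ, τ, hμ, hτ, hrate⟩ := nonmonotone_linear_convergence
    (mul_pos (mul_pos (half_pos hσ.1) hc₀) hκ₁) (mul_pos hc₀ ha0)
    (mul_le_one₀ ((hα 0).1.trans (hα 0).2) ha0.le ha1)
    (by have := (norm_nonneg _).trans (hG 0); positivity) (fun k => sq_nonneg ‖V k‖)
    (fun k hk => by linarith [hW₂ k hk, mul_nonneg hη0.le (sq_nonneg ‖W k‖)]) hsuff hcontr
  exact ⟨K₀, le_rfl, μ, τ, hμ, hτ, fun k hk => hrate k hk.le⟩

theorem stmt12 {n r : ℕ} (f h : Matrix (Fin n) (Fin r) ℝ → ℝ)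
    -- `f` is continuously differentiable with gradient function `g = ∇f`, which is `L`-Lipschitz
    (g : Matrix (Fin n) (Fin r) ℝ → Matrix (Fin n) (Fin r) ℝ)
    (Lf : Matrix (Fin n) (Fin r) ℝ → (Matrix (Fin n) (Fin r) ℝ →L[ℝ] ℝ))
    (hf : ∀ Z, HasFDerivAt f (Lf Z) Z) (hGrad : ∀ Z V, Lf Z V = tinner (g Z) V)
    (L Lh κ₁ κ₂ σ c₀ M₁ M₂ : ℝ) (m : ℕ)
    (hLipg : ∀ A B, ‖g A - g B‖ ≤ L * ‖A - B‖)
    -- `h` is convex and `L_h`-Lipschitz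
    (hconv : ConvexOn ℝ Set.univ h)
    (hLiph : ∀ A B, |h A - h B| ≤ Lh * ‖A - B‖)
    (hκ₁ : 0 < κ₁) (hκ₁₂ : κ₁ ≤ κ₂) (hσ : σ ∈ Set.Ioo (0 : ℝ) 1)
    (hc₀ : 0 < c₀) (hM₁ : 0 < M₁) (hM₂ : 0 < M₂)
    -- the sequences
    (X V : ℕ → Matrix (Fin n) (Fin r) ℝ) (α : ℕ → ℝ)
    (B : ℕ → (Matrix (Fin n) (Fin r) ℝ →ₗ[ℝ] Matrix (Fin n) (Fin r) ℝ))
    (hXSt : ∀ k, (X k)ᵀ * X k = 1)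
    (hVt : ∀ k, IsTangent (X k) (V k))
    (hα : ∀ k, α k ∈ Set.Icc c₀ 1)
    -- each `B_k` is self-adjoint and maps `T_{X_k}` into itself
    (hBsa : ∀ k U W, tinner U (B k W) = tinner (B k U) W)
    (hBtan : ∀ k W, IsTangent (X k) W → IsTangent (X k) (B k W))
    -- (i) uniform bounds on the quadratic form of `B_k` over `T_{X_k}`
    (hBbound : ∀ k W, IsTangent (X k) W →
      κ₁ * ‖W‖ ^ 2 ≤ tinner W (B k W) ∧ tinner W (B k W) ≤ κ₂ * ‖W‖ ^ 2)
    -- (ii) `V_k` minimizes `φ_k` over `T_{X_k}`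
    (hmin : ∀ k W, IsTangent (X k) W →
      tinner (g (X k)) (V k) + (1 / 2) * tinner (V k) (B k (V k)) + h (X k + V k) ≤
        tinner (g (X k)) W + (1 / 2) * tinner W (B k W) + h (X k + W))
    -- (iii)
    (hstep₁ : ∀ k, ‖X (k + 1) - X k‖ ≤ M₁ * ‖α k • V k‖)
    (hstep₂ : ∀ k, ‖X (k + 1) - X k - α k • V k‖ ≤ M₂ * ‖α k • V k‖ ^ 2)
    -- (iv) nonmonotone sufficient decrease
    (hdec : ∀ k, f (X (k + 1)) + h (X (k + 1)) ≤
      (Finset.Icc (k - m) k).sup' (Finset.nonempty_Icc.mpr (Nat.sub_le k m))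
          (fun j => f (X j) + h (X j))
        - σ / 2 * α k * tinner (V k) (B k (V k)))
    -- `X_k` converges to `X* ∈ St(n,r)`
    (Xs : Matrix (Fin n) (Fin r) ℝ) (hXsSt : Xsᵀ * Xs = 1)
    (hXconv : Tendsto X atTop (nhds Xs))
    -- the local structure hypotheses near `X*`
    (K₀ : ℕ) (η : ℝ) (hη : Lh * M₂ < η)
    (W : ℕ → Matrix (Fin n) (Fin r) ℝ)
    (hWt : ∀ k, K₀ ≤ k → IsTangent (X k) (W k))
    (hW₁ : ∀ k, K₀ ≤ k → ‖Xs - X k - W k‖ ≤ M₂ * ‖W k‖ ^ 2)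
    (hW₂ : ∀ k, K₀ ≤ k → η * ‖W k‖ ^ 2 ≤ (f (X k) + h (X k)) - (f Xs + h Xs))
    (hW₃ : ∀ k, K₀ ≤ k → tinner (g (X k)) (W k) ≤ f Xs - f (X k)) :
    ∃ K : ℕ, K₀ ≤ K ∧ ∃ μ τ : ℝ, 0 < μ ∧ τ ∈ Set.Ioo (0 : ℝ) 1 ∧
      ∀ k, K < k →
        (f (X k) + h (X k)) - (f Xs + h Xs) ≤
          μ * τ ^ (k - K) *
            ((Finset.Icc (K - m) K).sup' (Finset.nonempty_Icc.mpr (Nat.sub_le K m))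
                (fun j => f (X j) + h (X j)) - (f Xs + h Xs)) :=
  stmt12_general f h g Lf hf hGrad L Lh κ₁ κ₂ σ c₀ M₁ M₂ m hLipg hconv hLiph hκ₁ hκ₁₂ hσ hc₀ hM₂ X V
    α B hVt hα hBsa hBbound hmin hstep₁ hstep₂ hdec Xs hXconv K₀ η hη W hWt hW₁ hW₂ hW₃
end
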